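/- arXiv:1902.03358 — 5 statements merged into one kernel-verified Lean document; each statement's English description precedes it below -/
import Mathlib

section
/- Let μ be a topological measure on a locally compact, Hausdorff, connected space X. Then μ is superadditive: if (A_t)_{t∈T} is a family of pairwise disjoint subsets of X, each of which is open or closed, at most one of the closed sets among them is not compact, and ⊔_{t∈T} A_t ⊆ A where A is open or closed, then μ(A) ≥ Σ_{t∈T} μ(A_t). -/
open Set Filter Topology MeasureTheory
open scoped ENNReal BoundedContinuousFunction

universe u

/-- A topological measure on `X`: a set function on subsets of `X` (only its values on open
and closed sets matter), not identically `∞` on open/closed sets, satisfying (TM1)–(TM3). -/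
structure TopMeasure (X : Type u) [TopologicalSpace X] where
  toFun : Set X → ℝ≥0∞
  not_all_top : ∃ A : Set X, (IsOpen A ∨ IsClosed A) ∧ toFun A ≠ ∞
  tm1 : ∀ A B : Set X, Disjoint A B → (IsOpen A ∨ IsCompact A) → (IsOpen B ∨ IsCompact B) →
      (IsOpen (A ∪ B) ∨ IsCompact (A ∪ B)) → toFun (A ∪ B) = toFun A + toFun B
  tm2 : ∀ U : Set X, IsOpen U → toFun U = ⨆ K ∈ {K : Set X | IsCompact K ∧ K ⊆ U}, toFun K
  tm3 : ∀ F : Set X, IsClosed F → toFun F = ⨅ U ∈ {U : Set X | IsOpen U ∧ F ⊆ U}, toFun U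

/-- `μ` is compact-finite. -/
def TopMeasure.CompactFinite {X : Type u} [TopologicalSpace X] (μ : TopMeasure X) : Prop :=
  ∀ K : Set X, IsCompact K → μ.toFun K ≠ ∞

/-- The set of compactly supported continuous functions, inside `C_b(X)`. -/
def CcS (X : Type u) [TopologicalSpace X] : Set (X →ᵇ ℝ) :=
  {f | HasCompactSupport (f : X → ℝ)}

/-- The set of continuous functions vanishing at infinity, inside `C_b(X)`. -/
def C0S (X : Type u) [TopologicalSpace X] : Set (X →ᵇ ℝ) :=
  {f | Tendsto (f : X → ℝ) (cocompact X) (nhds 0)}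

/-- `𝔅` is a (non-unital) subalgebra of `C_b(X)`. -/
def IsSubalgS {X : Type u} [TopologicalSpace X] (𝔅 : Set (X →ᵇ ℝ)) : Prop :=
  (∀ f g : X →ᵇ ℝ, f ∈ 𝔅 → g ∈ 𝔅 → f + g ∈ 𝔅) ∧
  (∀ f g : X →ᵇ ℝ, f ∈ 𝔅 → g ∈ 𝔅 → f * g ∈ 𝔅) ∧
  (∀ (c : ℝ) (f : X →ᵇ ℝ), f ∈ 𝔅 → c • f ∈ 𝔅)

/-- The singly generated subalgebra `B(h)`: the smallest closed (in `𝔅`) subalgebra of `𝔅`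
containing `h`. -/
def sgen {X : Type u} [TopologicalSpace X] (𝔅 : Set (X →ᵇ ℝ)) (h : X →ᵇ ℝ) :
    Set (X →ᵇ ℝ) :=
  ⋂₀ {S : Set (X →ᵇ ℝ) | S ⊆ 𝔅 ∧ h ∈ S ∧
      (∀ f g : X →ᵇ ℝ, f ∈ S → g ∈ S → f + g ∈ S) ∧
      (∀ f g : X →ᵇ ℝ, f ∈ S → g ∈ S → f * g ∈ S) ∧
      (∀ (c : ℝ) (f : X →ᵇ ℝ), f ∈ S → c • f ∈ S) ∧
      IsClosed {x : ↥𝔅 | (x : X →ᵇ ℝ) ∈ S}}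

/-- A signed quasi-linear functional on `𝔅` (QI1), (QI2). -/
structure SignedQLF {X : Type u} [TopologicalSpace X] (𝔅 : Set (X →ᵇ ℝ)) where
  toFun : (X →ᵇ ℝ) → ℝ
  smul_eq : ∀ (a : ℝ) (f : X →ᵇ ℝ), f ∈ 𝔅 → toFun (a • f) = a * toFun f
  add_eq : ∀ h ∈ 𝔅, ∀ f g : X →ᵇ ℝ, f ∈ sgen 𝔅 h → g ∈ sgen 𝔅 h →
      toFun (f + g) = toFun f + toFun g

/-- A (positive) quasi-linear functional on `𝔅` (QI1)–(QI3). -/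
structure QLF {X : Type u} [TopologicalSpace X] (𝔅 : Set (X →ᵇ ℝ)) extends SignedQLF 𝔅 where
  pos : ∀ f : X →ᵇ ℝ, f ∈ 𝔅 → 0 ≤ f → 0 ≤ toFun f

/-- `‖ρ‖ = sup {ρ(f) : f ∈ 𝔅, 0 ≤ f ≤ 1}`, as an extended real number. -/
noncomputable def qnorm {X : Type u} [TopologicalSpace X] {𝔅 : Set (X →ᵇ ℝ)} (ρ : QLF 𝔅) :
    ℝ≥0∞ :=
  ⨆ f ∈ {f : X →ᵇ ℝ | f ∈ 𝔅 ∧ 0 ≤ f ∧ f ≤ 1}, ENNReal.ofReal (ρ.toFun f)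

/-- `m` is the measure `m_f` on `ℝ` associated with a finite topological measure `μ` and
`f ∈ C₀(X)` (case (A)): `m(W) = μ(f⁻¹(W))` for every open `W ⊆ ℝ`. -/
def IsMfA {X : Type u} [TopologicalSpace X] (μ : TopMeasure X) (f : X →ᵇ ℝ)
    (m : Measure ℝ) : Prop :=
  ∀ W : Set ℝ, IsOpen W → m W = μ.toFun ((f : X → ℝ) ⁻¹' W)

/-- `m` is the measure `m_f` on `ℝ` associated with a compact-finite topological measure `μ`
and `f ∈ C_c(X)` (case (B)): `m(W) = μ(f⁻¹(W \ {0}))` for every open `W ⊆ ℝ`. -/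
def IsMfB {X : Type u} [TopologicalSpace X] (μ : TopMeasure X) (f : X →ᵇ ℝ)
    (m : Measure ℝ) : Prop :=
  ∀ W : Set ℝ, IsOpen W → m W = μ.toFun ((f : X → ℝ) ⁻¹' (W \ {0}))

/-- The support of a (Borel) measure on `ℝ`. -/
def msupp (m : Measure ℝ) : Set ℝ := {x : ℝ | ∀ U ∈ nhds x, 0 < m U}

/-- The set function `μ_ρ` on open sets:
`μ_ρ(U) = sup {ρ(f) : f ∈ C_c(X), 0 ≤ f ≤ 1, supp f ⊆ U}`. -/
noncomputable def muO {X : Type u} [TopologicalSpace X] {𝔅 : Set (X →ᵇ ℝ)} (ρ : QLF 𝔅)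
    (U : Set X) : ℝ≥0∞ :=
  ⨆ f ∈ {f : X →ᵇ ℝ | f ∈ CcS X ∧ 0 ≤ f ∧ f ≤ 1 ∧ tsupport (f : X → ℝ) ⊆ U},
    ENNReal.ofReal (ρ.toFun f)

/-- The set function `μ_ρ` on closed sets: `μ_ρ(F) = inf {μ_ρ(U) : U open, F ⊆ U}`. -/
noncomputable def muC {X : Type u} [TopologicalSpace X] {𝔅 : Set (X →ᵇ ℝ)} (ρ : QLF 𝔅)
    (F : Set X) : ℝ≥0∞ :=
  ⨅ U ∈ {U : Set X | IsOpen U ∧ F ⊆ U}, muO ρ U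

open Classical in
/-- The set function `μ_ρ`. -/
noncomputable def muR {X : Type u} [TopologicalSpace X] {𝔅 : Set (X →ᵇ ℝ)} (ρ : QLF 𝔅) :
    Set X → ℝ≥0∞ :=
  fun A => if IsOpen A then muO ρ A else muC ρ A

/-- `ρ = ρ_μ` on `C₀(X)` (case (A)): for every `f ∈ C₀(X)` and every measure `m_f`
associated with `μ` and `f`, `ρ(f) = ∫_ℝ id dm_f`. -/
def ReprA {X : Type u} [TopologicalSpace X] {𝔅 : Set (X →ᵇ ℝ)} (μ : TopMeasure X)
    (ρ : QLF 𝔅) : Prop :=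
  ∀ f ∈ C0S X, ∀ m : Measure ℝ, IsMfA μ f m → ρ.toFun f = ∫ t, t ∂m

/-- `ρ = ρ_μ` on `C_c(X)` (case (B)). -/
def ReprB {X : Type u} [TopologicalSpace X] {𝔅 : Set (X →ᵇ ℝ)} (μ : TopMeasure X)
    (ρ : QLF 𝔅) : Prop :=
  ∀ f ∈ CcS X, ∀ m : Measure ℝ, IsMfB μ f m → ρ.toFun f = ∫ t, t ∂m

/-
It suffices to bound finite partial sums. Approximating each open set from inside by a
compact set (TM2), a finite subfamily becomes compact sets together with at most one closed
set `F`. Adding one compact set `K` at a time to `F` keeps it closed, and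
`μ F + μ K ≤ μ (F ∪ K)` because for an open `U ⊇ F ∪ K`, (TM1) splits `U` into `K` and the
open set `U \ K ⊇ F`.
-/

namespace TopMeasure

variable {X : Type u} [TopologicalSpace X] (μ : TopMeasure X)

lemma add_le_of_forall_isCompact_subset {U : Set X} (hU : IsOpen U ∨ IsCompact U)
    {a b : ℝ≥0∞} (h : ∀ K, IsCompact K → K ⊆ U → a + μ.toFun K ≤ b) :
    a + μ.toFun U ≤ b := by
  rcases hU with hU | hU
  · rw [μ.tm2 U hU, ENNReal.add_biSup
      (⟨∅, isCompact_empty, empty_subset U⟩ : {K : Set X | IsCompact K ∧ K ⊆ U}.Nonempty)]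
    exact iSup₂_le fun K hK => h K hK.1 hK.2
  · exact h U hU subset_rfl

variable [T2Space X]

lemma add_sdiff_eq {K U : Set X} (hK : IsCompact K) (hU : IsOpen U) (hKU : K ⊆ U) :
    μ.toFun K + μ.toFun (U \ K) = μ.toFun U := by
  have hsplit := μ.tm1 K (U \ K) disjoint_sdiff_right (Or.inr hK)
    (Or.inl (hU.sdiff hK.isClosed)) (by rw [union_sdiff_cancel hKU]; exact Or.inl hU)
  rw [union_sdiff_cancel hKU] at hsplit
  exact hsplit.symm

lemma le_of_isCompact_subset_isOpen {K U : Set X} (hK : IsCompact K) (hU : IsOpen U)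
    (hKU : K ⊆ U) : μ.toFun K ≤ μ.toFun U :=
  μ.add_sdiff_eq hK hU hKU ▸ le_self_add

lemma le_of_subset_isOpen {A U : Set X} (hA : IsOpen A ∨ IsClosed A) (hU : IsOpen U)
    (hAU : A ⊆ U) : μ.toFun A ≤ μ.toFun U := by
  rcases hA with hA | hA
  · rw [μ.tm2 A hA]
    exact iSup₂_le fun K hK => μ.le_of_isCompact_subset_isOpen hK.1 hU (hK.2.trans hAU)
  · rw [μ.tm3 A hA]
    exact iInf₂_le U ⟨hU, hAU⟩

lemma mono {A B : Set X} (hA : IsOpen A ∨ IsClosed A) (hB : IsOpen B ∨ IsClosed B)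
    (hAB : A ⊆ B) : μ.toFun A ≤ μ.toFun B := by
  rcases hB with hB | hB
  · exact μ.le_of_subset_isOpen hA hB hAB
  · rw [μ.tm3 B hB]
    exact le_iInf₂ fun U hU => μ.le_of_subset_isOpen hA hU.1 (hAB.trans hU.2)

lemma add_le_of_isOpen {F K U : Set X} (hF : IsClosed F) (hK : IsCompact K)
    (hFK : Disjoint F K) (hU : IsOpen U) (hFKU : F ∪ K ⊆ U) :
    μ.toFun F + μ.toFun K ≤ μ.toFun U := by
  have hKU : K ⊆ U := subset_union_right.trans hFKU
  have hF_le : μ.toFun F ≤ μ.toFun (U \ K) :=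
    μ.le_of_subset_isOpen (Or.inr hF) (hU.sdiff hK.isClosed)
      (subset_sdiff.2 ⟨subset_union_left.trans hFKU, hFK⟩)
  calc μ.toFun F + μ.toFun K ≤ μ.toFun (U \ K) + μ.toFun K := by gcongr
    _ = μ.toFun U := by rw [add_comm, μ.add_sdiff_eq hK hU hKU]

lemma add_le {F K B : Set X} (hF : IsClosed F) (hK : IsCompact K) (hFK : Disjoint F K)
    (hB : IsOpen B ∨ IsClosed B) (hFKB : F ∪ K ⊆ B) :
    μ.toFun F + μ.toFun K ≤ μ.toFun B := by
  rcases hB with hB | hB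
  · exact μ.add_le_of_isOpen hF hK hFK hB hFKB
  · rw [μ.tm3 B hB]
    exact le_iInf₂ fun U hU => μ.add_le_of_isOpen hF hK hFK hU.1 (hFKB.trans hU.2)

lemma add_sum_le {ι : Type*} {A : ι → Set X} {B : Set X} (hB : IsOpen B ∨ IsClosed B)
    (hdisj : Pairwise (Function.onFun Disjoint A)) (s : Finset ι)
    (hoc : ∀ t ∈ s, IsOpen (A t) ∨ IsCompact (A t)) (hAB : ∀ t ∈ s, A t ⊆ B)
    {F : Set X} (hF : IsClosed F) (hFB : F ⊆ B) (hFA : ∀ t ∈ s, Disjoint F (A t)) :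
    μ.toFun F + ∑ t ∈ s, μ.toFun (A t) ≤ μ.toFun B := by
  classical
  induction s using Finset.induction generalizing F with
  | empty => simpa using μ.mono (Or.inr hF) hB hFB
  | @insert a s ha ih =>
    rw [Finset.sum_insert ha, ← add_assoc, add_right_comm]
    refine μ.add_le_of_forall_isCompact_subset (hoc a (s.mem_insert_self a)) fun K hK hKA => ?_
    have hFK : Disjoint F K := (hFA a (s.mem_insert_self a)).mono_right hKA
    have hFK_le : μ.toFun F + μ.toFun K ≤ μ.toFun (F ∪ K) :=
      μ.add_le hF hK hFK (Or.inr (hF.union hK.isClosed)) subset_rfl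
    have hrest : μ.toFun (F ∪ K) + ∑ t ∈ s, μ.toFun (A t) ≤ μ.toFun B :=
      ih (fun t ht => hoc t (Finset.mem_insert_of_mem ht))
        (fun t ht => hAB t (Finset.mem_insert_of_mem ht)) (hF.union hK.isClosed)
        (union_subset hFB (hKA.trans (hAB a (s.mem_insert_self a))))
        fun t ht => disjoint_union_left.2
          ⟨hFA t (Finset.mem_insert_of_mem ht),
            (hdisj (ne_of_mem_of_not_mem ht ha).symm).mono_left hKA⟩
    calc μ.toFun F + ∑ t ∈ s, μ.toFun (A t) + μ.toFun K
        = μ.toFun F + μ.toFun K + ∑ t ∈ s, μ.toFun (A t) := add_right_comm _ _ _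
      _ ≤ μ.toFun (F ∪ K) + ∑ t ∈ s, μ.toFun (A t) := by gcongr
      _ ≤ μ.toFun B := hrest

end TopMeasure

theorem topMeasure_superadditive_general {X : Type u} [TopologicalSpace X]
    [T2Space X] (μ : TopMeasure X)
    {T : Type u} (A : T → Set X) (B : Set X)
    (hdisj : Pairwise (Function.onFun Disjoint A))
    (hoc : ∀ t, IsOpen (A t) ∨ IsClosed (A t))
    (hone : ∀ s t : T, IsClosed (A s) → ¬IsCompact (A s) →
      IsClosed (A t) → ¬IsCompact (A t) → s = t)
    (hB : IsOpen B ∨ IsClosed B) (hsub : (⋃ t, A t) ⊆ B) :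
    ∑' t, μ.toFun (A t) ≤ μ.toFun B := by
  classical
  have hAB : ∀ t, A t ⊆ B := fun t => (subset_iUnion A t).trans hsub
  have hbad : ∀ t, ¬(IsOpen (A t) ∨ IsCompact (A t)) → IsClosed (A t) ∧ ¬IsCompact (A t) :=
    fun t h => ⟨(hoc t).resolve_left fun ho => h (Or.inl ho), fun hc => h (Or.inr hc)⟩
  rw [ENNReal.tsum_eq_iSup_sum]
  refine iSup_le fun s => ?_
  by_cases hex : ∃ t₀ ∈ s, ¬(IsOpen (A t₀) ∨ IsCompact (A t₀))
  · obtain ⟨t₀, ht₀, hA₀⟩ := hex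
    have hgood : ∀ t ∈ s.erase t₀, IsOpen (A t) ∨ IsCompact (A t) := fun t ht => by
      by_contra hA
      exact Finset.ne_of_mem_erase ht <|
        hone t t₀ (hbad t hA).1 (hbad t hA).2 (hbad t₀ hA₀).1 (hbad t₀ hA₀).2
    rw [← Finset.add_sum_erase s _ ht₀]
    exact μ.add_sum_le hB hdisj _ hgood (fun t _ => hAB t) (hbad t₀ hA₀).1 (hAB t₀)
      fun t ht => hdisj (Finset.ne_of_mem_erase ht).symm
  · push Not at hex
    exact le_add_self.trans <| μ.add_sum_le hB hdisj s hex (fun t _ => hAB t) isClosed_empty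
      (empty_subset B) fun t _ => disjoint_bot_left

/-- a topological measure is superadditive: if pairwise disjoint sets `A t`
(each open or closed, with at most one non-compact closed set among them) satisfy
`⋃ t, A t ⊆ B` with `B` open or closed, then `∑' t, μ (A t) ≤ μ B`. -/
theorem topMeasure_superadditive {X : Type u} [TopologicalSpace X]
    [LocallyCompactSpace X] [T2Space X] [ConnectedSpace X] (μ : TopMeasure X)
    {T : Type u} (A : T → Set X) (B : Set X)
    (hdisj : Pairwise (Function.onFun Disjoint A))
    (hoc : ∀ t, IsOpen (A t) ∨ IsClosed (A t))
    (hone : ∀ s t : T, IsClosed (A s) → ¬IsCompact (A s) →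
      IsClosed (A t) → ¬IsCompact (A t) → s = t)
    (hB : IsOpen B ∨ IsClosed B) (hsub : (⋃ t, A t) ⊆ B) :
    ∑' t, μ.toFun (A t) ≤ μ.toFun B :=
  topMeasure_superadditive_general μ A B hdisj hoc hone hB hsub
end

section
/- Let X be a locally compact, Hausdorff, connected space, let f ∈ C₀(X) and let ε > 0. Then there exists h ∈ C_c(X) such that h belongs to the smallest closed subalgebra of C₀(X) containing f and ‖f − h‖_∞ ≤ ε. -/
open Set Filter Topology MeasureTheory
open scoped ENNReal BoundedContinuousFunction

universe u

/-! Put `φ t = t - max (-ε) (min ε t)` and `h = φ ∘ f`. Then `h` vanishes where `|f| < ε`, which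
is outside a compact set, and `f - h` is `f` clamped to `[-ε, ε]`, so `‖f - h‖ ≤ ε`. Since
`φ 0 = 0`, Weierstrass approximates `φ` uniformly on the range of `f` by polynomials `p` without
constant term; each `p(f)` lies in every subalgebra containing `f`, so `h` lies in every closed
one. -/

open Polynomial

theorem NonUnitalSubalgebra.aeval_mul_X_mem {R A : Type*} [CommSemiring R] [Semiring A]
    [Algebra R A] (s : NonUnitalSubalgebra R A) {a : A} (ha : a ∈ s) (q : R[X]) :
    aeval a (q * X) ∈ s := by
  induction q using Polynomial.induction_on with
  | C c => simpa [Algebra.smul_def] using s.smul_mem c ha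
  | add p q hp hq => simpa [add_mul] using add_mem hp hq
  | monomial n c ih => simpa [pow_succ, mul_assoc] using mul_mem ih ha

theorem NonUnitalSubalgebra.aeval_mem_of_coeff_zero {R A : Type*} [CommSemiring R] [Semiring A]
    [Algebra R A] (s : NonUnitalSubalgebra R A) {a : A} (ha : a ∈ s) {p : R[X]}
    (hp : p.coeff 0 = 0) : aeval a p ∈ s := by
  rw [show p = p.divX * X by simpa [hp] using (divX_mul_X_add p).symm]
  exact s.aeval_mul_X_mem ha _

def clampSymm (ε t : ℝ) : ℝ := max (-ε) (min ε t)

theorem lipschitzWith_clampSymm (ε : ℝ) : LipschitzWith 1 (clampSymm ε) :=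
  (LipschitzWith.id.const_min ε).const_max (-ε)

theorem abs_clampSymm_le {ε : ℝ} (hε : 0 ≤ ε) (t : ℝ) : |clampSymm ε t| ≤ ε :=
  abs_le.2 ⟨le_max_left _ _, max_le (by linarith) (min_le_left _ _)⟩

theorem clampSymm_of_abs_le {ε t : ℝ} (ht : |t| ≤ ε) : clampSymm ε t = t := by
  rw [clampSymm, min_eq_right (abs_le.1 ht).2, max_eq_right (abs_le.1 ht).1]

theorem HasCompactSupport.of_norm_lt_imp_eq_zero {X E F : Type*} [TopologicalSpace X]
    [NormedAddCommGroup E] [Zero F] {f : X → E} (hfc : Continuous f)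
    (hf : Tendsto f (cocompact X) (𝓝 0)) {ε : ℝ} (hε : 0 < ε) {g : X → F}
    (hg : ∀ x, ‖f x‖ < ε → g x = 0) : HasCompactSupport g := by
  obtain ⟨K, hK, hKf⟩ := mem_cocompact.1 (hf (Metric.ball_mem_nhds 0 hε))
  have hsub : {x | ε ≤ ‖f x‖} ⊆ K := fun x hx ↦ by
    by_contra hxK
    simpa using (hx.trans_lt (mem_ball_zero_iff.1 (hKf hxK)))
  exact .intro' (hK.of_isClosed_subset (isClosed_le continuous_const hfc.norm) hsub)
    (isClosed_le continuous_const hfc.norm) fun x hx ↦ hg x (not_le.1 hx)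

namespace BoundedContinuousFunction

variable {X : Type*} [TopologicalSpace X]

theorem aeval_apply (f : X →ᵇ ℝ) (p : ℝ[X]) (x : X) : aeval f p x = p.eval (f x) := by
  simpa [aeval_continuousMap_apply] using
    congr($(aeval_algHom_apply (toContinuousMapₐ ℝ) f p) x).symm

theorem mem_sgen_of_forall_dist_aeval_lt {𝔅 : Set (X →ᵇ ℝ)} {f g : X →ᵇ ℝ} (hg : g ∈ 𝔅)
    (happrox : ∀ δ > 0, ∃ p : ℝ[X], p.coeff 0 = 0 ∧ dist g (aeval f p) < δ) :
    g ∈ sgen 𝔅 f := by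
  rintro S ⟨hS𝔅, hfS, hadd, hmul, hsmul, hclosed⟩
  let A : NonUnitalSubalgebra ℝ (X →ᵇ ℝ) :=
    { carrier := S
      add_mem' := hadd _ _
      zero_mem' := by simpa using hsmul 0 f hfS
      mul_mem' := hmul _ _
      smul_mem' := hsmul }
  have hg_closure : (⟨g, hg⟩ : 𝔅) ∈ closure {x : 𝔅 | (x : X →ᵇ ℝ) ∈ S} :=
    Metric.mem_closure_iff.2 fun δ hδ ↦ by
      obtain ⟨p, hp0, hp⟩ := happrox δ hδ
      have hpS : aeval f p ∈ S := A.aeval_mem_of_coeff_zero hfS hp0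
      exact ⟨⟨_, hS𝔅 hpS⟩, hpS, hp⟩
  rwa [hclosed.closure_eq] at hg_closure

theorem exists_coeff_zero_dist_aeval_lt {φ : ℝ → ℝ} (hφ : Continuous φ) (hφ0 : φ 0 = 0)
    {f g : X →ᵇ ℝ} (hg : ∀ x, g x = φ (f x)) {δ : ℝ} (hδ : 0 < δ) :
    ∃ p : ℝ[X], p.coeff 0 = 0 ∧ dist g (aeval f p) < δ := by
  obtain ⟨p, hp⟩ := exists_polynomial_near_of_continuousOn (-‖f‖) ‖f‖ φ hφ.continuousOn
    (δ / 3) (by positivity)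
  have hp0 : |p.coeff 0| < δ / 3 := by
    simpa [hφ0, coeff_zero_eq_eval_zero] using hp 0 ⟨by simp, norm_nonneg f⟩
  refine ⟨p - Polynomial.C (p.coeff 0), by simp,
    ((dist_le (by positivity)).2 fun x ↦ ?_).trans_lt (by linarith : 2 * δ / 3 < δ)⟩
  have hpx := hp (f x) (abs_le.1 (f.norm_coe_le_norm x))
  rw [hg, aeval_apply, Real.dist_eq, eval_sub, eval_C]
  calc |φ (f x) - (p.eval (f x) - p.coeff 0)|
      = |-(p.eval (f x) - φ (f x)) + p.coeff 0| := by ring_nf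
    _ ≤ |p.eval (f x) - φ (f x)| + |p.coeff 0| := (abs_add_le _ _).trans_eq (by rw [abs_neg])
    _ ≤ 2 * δ / 3 := by linarith

end BoundedContinuousFunction

open BoundedContinuousFunction in
theorem exists_compactSupport_approx_in_sgen_general {X : Type u} [TopologicalSpace X]
    (f : X →ᵇ ℝ) (hf : f ∈ C0S X) (ε : ℝ) (hε : 0 < ε) :
    ∃ h : X →ᵇ ℝ, h ∈ CcS X ∧ h ∈ sgen (C0S X) f ∧ ‖f - h‖ ≤ ε := by
  set c := f.comp (clampSymm ε) (lipschitzWith_clampSymm ε)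
  have hCc : f - c ∈ CcS X := HasCompactSupport.of_norm_lt_imp_eq_zero f.continuous hf hε
    fun x hx ↦ by simp [c, clampSymm_of_abs_le hx.le]
  have hsgen : f - c ∈ sgen (C0S X) f :=
    mem_sgen_of_forall_dist_aeval_lt hCc.is_zero_at_infty fun _ ↦
      exists_coeff_zero_dist_aeval_lt (φ := fun t ↦ t - clampSymm ε t)
        (continuous_id.sub (lipschitzWith_clampSymm ε).continuous)
        (by simp [clampSymm_of_abs_le, hε.le]) fun _ ↦ rfl
  refine ⟨f - c, hCc, hsgen, ?_⟩
  rw [sub_sub_cancel]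
  exact (norm_le hε.le).2 fun x ↦ abs_clampSymm_le hε.le (f x)

/-- every `f ∈ C₀(X)` can be approximated within `ε` by some `h ∈ C_c(X)`
belonging to the smallest closed subalgebra of `C₀(X)` containing `f`. -/
theorem exists_compactSupport_approx_in_sgen {X : Type u} [TopologicalSpace X]
    [LocallyCompactSpace X] [T2Space X] [ConnectedSpace X]
    (f : X →ᵇ ℝ) (hf : f ∈ C0S X) (ε : ℝ) (hε : 0 < ε) :
    ∃ h : X →ᵇ ℝ, h ∈ CcS X ∧ h ∈ sgen (C0S X) f ∧ ‖f - h‖ ≤ ε :=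
  exists_compactSupport_approx_in_sgen_general f hf ε hε
end

section
/- Let X be a locally compact, Hausdorff, connected space, let 𝔅 be a subalgebra of C_b(X) containing C_c(X), and let ρ be a (positive) quasi-linear functional on 𝔅. If f, g ∈ C_c(X) and f ≥ g, then ρ(f) ≥ ρ(g). -/
open Set Filter Topology MeasureTheory
open scoped ENNReal BoundedContinuousFunction

universe u

/-!
Quasi-linearity gives additivity only inside a singly generated subalgebra `B(h)`, but by
Weierstrass `B(h)` contains every `φ ∘ h ∈ 𝔅` with `φ` continuous and `φ 0 = 0`. Hence `ρ` is
monotone on each `B(h)`, and `ρ u ≤ ρ v` as soon as `0 ≤ u ≤ c` and `c ≤ v` on the support of `u`: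
both `u` and `v ⊓ c` are functions of `u + v ⊓ c`.

For `0 ≤ g ≤ f`, cut `g` and `f` into `n + 1` horizontal slabs of height `δ`. The `(i+1)`-st slab
of `g` lives where `f ≥ (i+1)δ`, so it is dominated in the above sense by the `i`-th slab of `f`,
and the bottom slab of `g` by `δ w` for a bump `w` equal to `1` on the support of `g`. This gives
`ρ g ≤ ρ f + δ ρ w`, and `δ → 0`. In general, `g ≤ f` gives `g⁺ ≤ f⁺` and `f⁻ ≤ g⁻`, and
`ρ h = ρ h⁺ - ρ h⁻` because `h⁺, h⁻ ∈ B(h)`.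
-/

open BoundedContinuousFunction

section SinglyGenerated

variable {X : Type u} [TopologicalSpace X] {𝔅 : Set (X →ᵇ ℝ)} {h f g : X →ᵇ ℝ}

lemma sgen_subset (hsub : IsSubalgS 𝔅) (h𝔅 : h ∈ 𝔅) : sgen 𝔅 h ⊆ 𝔅 := fun _ hy =>
  hy 𝔅 ⟨subset_rfl, h𝔅, hsub.1, hsub.2.1, hsub.2.2, by simp⟩

lemma mem_sgen_self : h ∈ sgen 𝔅 h := fun _ hS => hS.2.1

lemma add_mem_sgen (hf : f ∈ sgen 𝔅 h) (hg : g ∈ sgen 𝔅 h) : f + g ∈ sgen 𝔅 h :=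
  fun S hS => hS.2.2.1 f g (hf S hS) (hg S hS)

lemma mul_mem_sgen (hf : f ∈ sgen 𝔅 h) (hg : g ∈ sgen 𝔅 h) : f * g ∈ sgen 𝔅 h :=
  fun S hS => hS.2.2.2.1 f g (hf S hS) (hg S hS)

lemma smul_mem_sgen (c : ℝ) (hf : f ∈ sgen 𝔅 h) : c • f ∈ sgen 𝔅 h :=
  fun S hS => hS.2.2.2.2.1 c f (hf S hS)

lemma zero_mem_sgen : (0 : X →ᵇ ℝ) ∈ sgen 𝔅 h := by
  simpa using smul_mem_sgen 0 (mem_sgen_self (𝔅 := 𝔅) (h := h))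

lemma sub_mem_sgen (hf : f ∈ sgen 𝔅 h) (hg : g ∈ sgen 𝔅 h) : f - g ∈ sgen 𝔅 h := by
  rw [sub_eq_add_neg, ← neg_one_smul ℝ g]
  exact add_mem_sgen hf (smul_mem_sgen (-1) hg)

lemma sum_mem_sgen {ι : Type*} (s : Finset ι) {a : ι → X →ᵇ ℝ}
    (ha : ∀ i ∈ s, a i ∈ sgen 𝔅 h) : ∑ i ∈ s, a i ∈ sgen 𝔅 h :=
  Finset.sum_induction a (· ∈ sgen 𝔅 h) (fun _ _ => add_mem_sgen) zero_mem_sgen ha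

lemma pow_succ_mem_sgen (n : ℕ) : h ^ (n + 1) ∈ sgen 𝔅 h := by
  induction n with
  | zero => simpa using mem_sgen_self
  | succ n ih => rw [pow_succ]; exact mul_mem_sgen ih mem_sgen_self

lemma mem_sgen_of_mem_closure (hsub : IsSubalgS 𝔅) (h𝔅 : h ∈ 𝔅) {y : X →ᵇ ℝ} (hy𝔅 : y ∈ 𝔅)
    (hy : y ∈ closure (sgen 𝔅 h)) : y ∈ sgen 𝔅 h := by
  obtain ⟨z, hz, hzy⟩ := mem_closure_iff_seq_limit.1 hy
  intro S hS
  have hz𝔅 : ∀ n, z n ∈ 𝔅 := fun n => sgen_subset hsub h𝔅 (hz n)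
  have hlim : Tendsto (fun n => (⟨z n, hz𝔅 n⟩ : 𝔅)) atTop (𝓝 ⟨y, hy𝔅⟩) :=
    tendsto_subtype_rng.2 hzy
  exact hS.2.2.2.2.2.mem_of_tendsto hlim (Eventually.of_forall fun n => hz n S hS)

lemma exists_mem_sgen_apply_eq_eval (p : Polynomial ℝ) (hp : p.eval 0 = 0) :
    ∃ z ∈ sgen 𝔅 h, ∀ x, z x = p.eval (h x) := by
  refine ⟨∑ k ∈ Finset.range (p.natDegree + 1), p.coeff k • h ^ k,
    sum_mem_sgen _ fun k _ => ?_, fun x => ?_⟩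
  · cases k with
    | zero => simpa [Polynomial.coeff_zero_eq_eval_zero, hp] using zero_mem_sgen
    | succ k => exact smul_mem_sgen _ (pow_succ_mem_sgen k)
  · simp [Polynomial.eval_eq_sum_range]

lemma comp_mem_sgen (hsub : IsSubalgS 𝔅) (h𝔅 : h ∈ 𝔅) {y : X →ᵇ ℝ} (hy𝔅 : y ∈ 𝔅)
    {φ : ℝ → ℝ} (hφ : Continuous φ) (hφ0 : φ 0 = 0) (hy : ∀ x, y x = φ (h x)) :
    y ∈ sgen 𝔅 h := by
  refine mem_sgen_of_mem_closure hsub h𝔅 hy𝔅 (Metric.mem_closure_iff.2 fun ε hε => ?_)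
  obtain ⟨p, hp⟩ := exists_polynomial_near_of_continuousOn (-‖h‖) ‖h‖ φ hφ.continuousOn
    (ε / 3) (by positivity)
  have hp0 : |p.eval 0| < ε / 3 := by
    simpa [hφ0] using hp 0 ⟨by simp, norm_nonneg h⟩
  -- `p` need not vanish at `0`, but `p - p(0)` does and is still `2ε/3`-close to `φ` on `[-‖h‖, ‖h‖]`
  obtain ⟨z, hz, hzx⟩ := exists_mem_sgen_apply_eq_eval (𝔅 := 𝔅) (h := h)
    (p - Polynomial.C (p.eval 0)) (by simp)
  refine ⟨z, hz, ?_⟩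
  have hdist : dist y z ≤ 2 * (ε / 3) := by
    refine (dist_le (by positivity)).2 fun x => ?_
    have hx := hp (h x) (abs_le.1 (by simpa using h.norm_coe_le_norm x))
    rw [hy, hzx, Real.dist_eq, Polynomial.eval_sub, Polynomial.eval_C, abs_le]
    constructor <;> linarith [abs_lt.1 hx, abs_lt.1 hp0]
  linarith

end SinglyGenerated

section CompactSupport

variable {X : Type u} [TopologicalSpace X] {h y : X →ᵇ ℝ}

lemma mem_CcS_of_apply_eq_comp (hh : h ∈ CcS X) {φ : ℝ → ℝ} (hφ0 : φ 0 = 0)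
    (hy : ∀ x, y x = φ (h x)) : y ∈ CcS X := by
  show HasCompactSupport y
  rw [show ⇑y = φ ∘ h from funext hy]
  exact HasCompactSupport.comp_left hh hφ0

lemma posPart_mem_CcS (hh : h ∈ CcS X) : h⁺ ∈ CcS X :=
  mem_CcS_of_apply_eq_comp hh (φ := posPart) (by simp) fun _ => rfl

lemma negPart_mem_CcS (hh : h ∈ CcS X) : h⁻ ∈ CcS X :=
  mem_CcS_of_apply_eq_comp hh (φ := negPart) (by simp) fun _ => rfl

lemma exists_mem_CcS_nonneg_eq_one_on [LocallyCompactSpace X] [T2Space X] {K : Set X}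
    (hK : IsCompact K) : ∃ w ∈ CcS X, 0 ≤ w ∧ ∀ x ∈ K, w x = 1 := by
  obtain ⟨ψ, hψ1, -, hψ, hψ01⟩ :=
    exists_continuous_one_zero_of_isCompact hK isClosed_empty (Set.disjoint_empty K)
  exact ⟨CompactlySupportedContinuousMap.toBoundedContinuousFunction ⟨ψ, hψ⟩, hψ,
    fun x => (hψ01 x).1, fun x hx => hψ1 hx⟩

end CompactSupport

section Slabs

variable {X : Type u} [TopologicalSpace X] {a δ : ℝ} {F : X →ᵇ ℝ}

def slab (a δ : ℝ) (F : X →ᵇ ℝ) : X →ᵇ ℝ := ((F - const X a) ⊔ 0) ⊓ const X δ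

lemma slab_apply (x : X) : slab a δ F x = min (max (F x - a) 0) δ := rfl

lemma min_max_sub_zero_eq_min_sub_min (t a : ℝ) (hδ : 0 ≤ δ) :
    min (max (t - a) 0) δ = min t (a + δ) - min t a := by
  rcases le_total t a with hta | hta
  · simp [min_eq_left hta, min_eq_left (hta.trans (le_add_of_nonneg_right hδ)), hδ,
      sub_nonpos.2 hta]
  · rcases le_total t (a + δ) with htb | htb
    · simp [min_eq_left htb, hta, show t - a ≤ δ by linarith]
    · simp [min_eq_right hta, min_eq_right htb, show δ ≤ t - a by linarith]

lemma sum_slab (hδ : 0 ≤ δ) (m : ℕ) (hF0 : 0 ≤ F) (hFm : ∀ x, F x ≤ m * δ) :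
    ∑ i ∈ Finset.range m, slab (i * δ) δ F = F := by
  ext x
  have hFx : 0 ≤ F x := hF0 x
  have hstep : ∀ i : ℕ, (i : ℝ) * δ + δ = ((i + 1 : ℕ) : ℝ) * δ := fun i => by push_cast; ring
  simp only [coe_sum, Finset.sum_apply, slab_apply,
    min_max_sub_zero_eq_min_sub_min _ _ hδ, hstep]
  rw [Finset.sum_range_sub (fun i : ℕ => min (F x) (i * δ)), min_eq_left (hFm x)]
  simp [hFx]

lemma slab_nonneg (hδ : 0 ≤ δ) : 0 ≤ slab a δ F := fun _ =>
  le_min (le_max_right _ _) hδ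

lemma slab_le (x : X) : slab a δ F x ≤ δ := min_le_right _ _

lemma slab_eq_of_add_le {x : X} (hx : a + δ ≤ F x) : slab a δ F x = δ := by
  rw [slab_apply]
  exact min_eq_right (le_max_of_le_left (by linarith))

lemma tsupport_slab_subset (hδ : 0 ≤ δ) : tsupport (slab a δ F) ⊆ {x | a ≤ F x} := by
  refine closure_minimal (fun x hx => show a ≤ F x from le_of_not_gt fun hlt => hx ?_)
    (isClosed_le continuous_const F.continuous)
  simp [slab_apply, max_eq_right (sub_nonpos.2 hlt.le), hδ]

lemma tsupport_slab_subset_tsupport (ha : 0 ≤ a) (hδ : 0 ≤ δ) :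
    tsupport (slab a δ F) ⊆ tsupport F :=
  tsupport_comp_subset (g := fun t => min (max (t - a) 0) δ) (by simp [ha, hδ]) F

lemma slab_mem_CcS (ha : 0 ≤ a) (hδ : 0 ≤ δ) (hF : F ∈ CcS X) : slab a δ F ∈ CcS X :=
  mem_CcS_of_apply_eq_comp hF (φ := fun t => min (max (t - a) 0) δ) (by simp [ha, hδ]) slab_apply

lemma slab_mem_sgen {𝔅 : Set (X →ᵇ ℝ)} (hsub : IsSubalgS 𝔅) (hCc : CcS X ⊆ 𝔅) (ha : 0 ≤ a)
    (hδ : 0 ≤ δ) (hF : F ∈ CcS X) : slab a δ F ∈ sgen 𝔅 F :=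
  comp_mem_sgen hsub (hCc hF) (hCc (slab_mem_CcS ha hδ hF))
    (φ := fun t => min (max (t - a) 0) δ) (by fun_prop) (by simp [ha, hδ]) slab_apply

end Slabs

namespace QLF

variable {X : Type u} [TopologicalSpace X] {𝔅 : Set (X →ᵇ ℝ)} (ρ : QLF 𝔅) {h : X →ᵇ ℝ}

lemma map_zero (h𝔅 : h ∈ 𝔅) : ρ.toFun 0 = 0 := by
  simpa using ρ.smul_eq 0 h h𝔅

lemma map_sum (h𝔅 : h ∈ 𝔅) {ι : Type*} (s : Finset ι) {a : ι → X →ᵇ ℝ}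
    (ha : ∀ i ∈ s, a i ∈ sgen 𝔅 h) : ρ.toFun (∑ i ∈ s, a i) = ∑ i ∈ s, ρ.toFun (a i) := by
  classical
  induction s using Finset.induction_on with
  | empty => simpa using ρ.map_zero h𝔅
  | insert i s hi ih =>
    have hs : ∀ j ∈ s, a j ∈ sgen 𝔅 h := fun j hj => ha j (Finset.mem_insert_of_mem hj)
    rw [Finset.sum_insert hi, Finset.sum_insert hi,
      ρ.add_eq h h𝔅 _ _ (ha i (Finset.mem_insert_self i s)) (sum_mem_sgen s hs), ih hs]

lemma map_sub (h𝔅 : h ∈ 𝔅) {a b : X →ᵇ ℝ} (ha : a ∈ sgen 𝔅 h) (hb : b ∈ sgen 𝔅 h) :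
    ρ.toFun (a - b) = ρ.toFun a - ρ.toFun b := by
  have hadd := ρ.add_eq h h𝔅 (a - b) b (sub_mem_sgen ha hb) hb
  rw [sub_add_cancel] at hadd
  linarith

lemma mono_on_sgen (hsub : IsSubalgS 𝔅) (h𝔅 : h ∈ 𝔅) {a b : X →ᵇ ℝ} (ha : a ∈ sgen 𝔅 h)
    (hb : b ∈ sgen 𝔅 h) (hab : a ≤ b) : ρ.toFun a ≤ ρ.toFun b := by
  have hba := ρ.pos _ (sgen_subset hsub h𝔅 (sub_mem_sgen hb ha)) (sub_nonneg.2 hab)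
  rw [ρ.map_sub h𝔅 hb ha] at hba
  linarith

lemma le_of_le_on_tsupport (hsub : IsSubalgS 𝔅) (hCc : CcS X ⊆ 𝔅) {u v : X →ᵇ ℝ} {c : ℝ}
    (hu : u ∈ CcS X) (hv : v ∈ CcS X) (hc : 0 ≤ c) (hu0 : 0 ≤ u) (huc : ∀ x, u x ≤ c)
    (hv0 : 0 ≤ v) (hvc : ∀ x ∈ tsupport u, c ≤ v x) : ρ.toFun u ≤ ρ.toFun v := by
  have hu0' : ∀ x, 0 ≤ u x := hu0
  set w := v ⊓ const X c
  have hwx : ∀ x, w x = min (v x) c := fun _ => rfl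
  have hw_le : ∀ x, w x ≤ c := fun _ => min_le_right _ _
  have hw : w ∈ CcS X :=
    mem_CcS_of_apply_eq_comp hv (φ := fun t => min t c) (min_eq_left hc) hwx
  have hwc : ∀ x ∈ tsupport u, w x = c := fun x hx => min_eq_right (hvc x hx)
  have huw : u + w ∈ CcS X := HasCompactSupport.add hu hw
  have hu_mem : u ∈ sgen 𝔅 (u + w) := by
    refine comp_mem_sgen hsub (hCc huw) (hCc hu) (φ := fun t => max (t - c) 0) (by fun_prop)
      (by simpa using hc) fun x => ?_
    by_cases hx : x ∈ tsupport u
    · simp [hwc x hx, hu0' x]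
    · simp [image_eq_zero_of_notMem_tsupport hx, hw_le x]
  have hw_mem : w ∈ sgen 𝔅 (u + w) := by
    refine comp_mem_sgen hsub (hCc huw) (hCc hw) (φ := fun t => min t c) (by fun_prop)
      (min_eq_left hc) fun x => ?_
    by_cases hx : x ∈ tsupport u
    · simp [hwc x hx, hu0' x]
    · simp [image_eq_zero_of_notMem_tsupport hx, hw_le x]
  have huw_le : u ≤ w := fun x => by
    by_cases hx : x ∈ tsupport u
    · exact (huc x).trans_eq (hwc x hx).symm
    · simpa [image_eq_zero_of_notMem_tsupport hx, hwx] using ⟨hv0 x, hc⟩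
  calc ρ.toFun u ≤ ρ.toFun w := ρ.mono_on_sgen hsub (hCc huw) hu_mem hw_mem huw_le
    _ ≤ ρ.toFun v := ρ.mono_on_sgen hsub (hCc hv)
        (comp_mem_sgen hsub (hCc hv) (hCc hw) (φ := fun t => min t c) (by fun_prop)
          (min_eq_left hc) hwx)
        mem_sgen_self fun x => min_le_left _ _

lemma le_add_mul_of_slabs (hsub : IsSubalgS 𝔅) (hCc : CcS X ⊆ 𝔅) {f g w : X →ᵇ ℝ}
    (hf : f ∈ CcS X) (hg : g ∈ CcS X) (hw : w ∈ CcS X) (hg0 : 0 ≤ g) (hgf : g ≤ f)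
    (hw0 : 0 ≤ w) (hw1 : ∀ x ∈ tsupport g, 1 ≤ w x) {δ : ℝ} (hδ : 0 ≤ δ) (n : ℕ)
    (hfn : ∀ x, f x ≤ (n + 1 : ℕ) * δ) : ρ.toFun g ≤ ρ.toFun f + δ * ρ.toFun w := by
  have hiδ : ∀ i : ℕ, 0 ≤ (i : ℝ) * δ := fun i => by positivity
  have hρ_sum : ∀ F ∈ CcS X, 0 ≤ F → (∀ x, F x ≤ (n + 1 : ℕ) * δ) →
      ρ.toFun F = ∑ i ∈ Finset.range (n + 1), ρ.toFun (slab (i * δ) δ F) := by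
    intro F hF hF0 hFn
    conv_lhs => rw [← sum_slab hδ (n + 1) hF0 hFn]
    exact ρ.map_sum (hCc hF) _ fun i _ => slab_mem_sgen hsub hCc (hiδ i) hδ hF
  have hbottom : ρ.toFun (slab 0 δ g) ≤ δ * ρ.toFun w := by
    rw [← ρ.smul_eq δ w (hCc hw)]
    refine ρ.le_of_le_on_tsupport hsub hCc (slab_mem_CcS le_rfl hδ hg)
      (mem_CcS_of_apply_eq_comp hw (φ := (δ * ·)) (mul_zero δ) fun _ => rfl) hδ
      (slab_nonneg hδ) slab_le (fun x => mul_nonneg hδ (hw0 x)) fun x hx => ?_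
    simpa using mul_le_mul_of_nonneg_left
      (hw1 x (tsupport_slab_subset_tsupport le_rfl hδ hx)) hδ
  have hstep : ∀ i : ℕ, ρ.toFun (slab ((i + 1 : ℕ) * δ) δ g) ≤ ρ.toFun (slab (i * δ) δ f) :=
    fun i => ρ.le_of_le_on_tsupport hsub hCc (slab_mem_CcS (hiδ _) hδ hg)
      (slab_mem_CcS (hiδ i) hδ hf) hδ (slab_nonneg hδ) slab_le (slab_nonneg hδ)
      fun x hx => (slab_eq_of_add_le (by
        have hfx : ((i + 1 : ℕ) : ℝ) * δ ≤ f x := (tsupport_slab_subset hδ hx).trans (hgf x)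
        push_cast at hfx
        linarith)).ge
  have hlast : 0 ≤ ρ.toFun (slab (n * δ) δ f) :=
    ρ.pos _ (hCc (slab_mem_CcS (hiδ n) hδ hf)) (slab_nonneg hδ)
  calc ρ.toFun g
      = ∑ i ∈ Finset.range n, ρ.toFun (slab ((i + 1 : ℕ) * δ) δ g) + ρ.toFun (slab 0 δ g) := by
        rw [hρ_sum g hg hg0 fun x => (hgf x).trans (hfn x), Finset.sum_range_succ']
        simp
    _ ≤ ∑ i ∈ Finset.range n, ρ.toFun (slab (i * δ) δ f) + δ * ρ.toFun w :=
        add_le_add (Finset.sum_le_sum fun i _ => hstep i) hbottom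
    _ ≤ ρ.toFun f + δ * ρ.toFun w := by
        rw [hρ_sum f hf (hg0.trans hgf) hfn, Finset.sum_range_succ]
        linarith

lemma mono_of_nonneg [LocallyCompactSpace X] [T2Space X] (hsub : IsSubalgS 𝔅)
    (hCc : CcS X ⊆ 𝔅) {f g : X →ᵇ ℝ} (hf : f ∈ CcS X) (hg : g ∈ CcS X) (hg0 : 0 ≤ g)
    (hgf : g ≤ f) : ρ.toFun g ≤ ρ.toFun f := by
  obtain ⟨w, hw, hw0, hw1⟩ := exists_mem_CcS_nonneg_eq_one_on (X := X) hg
  have hbound : ∀ n : ℕ, ρ.toFun g ≤ ρ.toFun f + ‖f‖ / (n + 1 : ℕ) * ρ.toFun w := fun n =>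
    ρ.le_add_mul_of_slabs hsub hCc hf hg hw hg0 hgf hw0 (fun x hx => (hw1 x hx).ge)
      (by positivity) n fun x => by
        rw [mul_div_cancel₀ _ (by positivity)]
        exact (le_abs_self _).trans (by simpa using f.norm_coe_le_norm x)
  have hlim : Tendsto (fun n : ℕ => ρ.toFun f + ‖f‖ / (n + 1 : ℕ) * ρ.toFun w) atTop
      (𝓝 (ρ.toFun f)) := by
    simpa using (((tendsto_const_div_atTop_nhds_zero_nat ‖f‖).comp
      (tendsto_add_atTop_nat 1)).mul_const (ρ.toFun w)).const_add (ρ.toFun f)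
  exact ge_of_tendsto' hlim hbound

lemma eq_posPart_sub_negPart (hsub : IsSubalgS 𝔅) (hCc : CcS X ⊆ 𝔅)
    (hh : h ∈ CcS X) : ρ.toFun h = ρ.toFun h⁺ - ρ.toFun h⁻ := by
  have hp : h⁺ ∈ sgen 𝔅 h := comp_mem_sgen hsub (hCc hh) (hCc (posPart_mem_CcS hh))
    continuous_posPart (by simp) fun _ => rfl
  have hn : h⁻ ∈ sgen 𝔅 h := comp_mem_sgen hsub (hCc hh) (hCc (negPart_mem_CcS hh))
    continuous_negPart (by simp) fun _ => rfl
  rw [← ρ.map_sub (hCc hh) hp hn, posPart_sub_negPart]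

end QLF

theorem qlf_monotone_on_compactSupport_general {X : Type u} [TopologicalSpace X]
    [LocallyCompactSpace X] [T2Space X]
    (𝔅 : Set (X →ᵇ ℝ)) (hsub : IsSubalgS 𝔅) (hCc : CcS X ⊆ 𝔅) (ρ : QLF 𝔅)
    (f g : X →ᵇ ℝ) (hf : f ∈ CcS X) (hg : g ∈ CcS X) (hle : g ≤ f) :
    ρ.toFun g ≤ ρ.toFun f := by
  have hpos : ρ.toFun g⁺ ≤ ρ.toFun f⁺ := ρ.mono_of_nonneg hsub hCc (posPart_mem_CcS hf)
    (posPart_mem_CcS hg) (posPart_nonneg g) (posPart_mono hle)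
  have hneg : ρ.toFun f⁻ ≤ ρ.toFun g⁻ := ρ.mono_of_nonneg hsub hCc (negPart_mem_CcS hg)
    (negPart_mem_CcS hf) (negPart_nonneg f) (negPart_anti hle)
  rw [ρ.eq_posPart_sub_negPart hsub hCc hg, ρ.eq_posPart_sub_negPart hsub hCc hf]
  linarith

/-- a (positive) quasi-linear functional is monotone on `C_c(X)`. -/
theorem qlf_monotone_on_compactSupport {X : Type u} [TopologicalSpace X]
    [LocallyCompactSpace X] [T2Space X] [ConnectedSpace X]
    (𝔅 : Set (X →ᵇ ℝ)) (hsub : IsSubalgS 𝔅) (hCc : CcS X ⊆ 𝔅) (ρ : QLF 𝔅)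
    (f g : X →ᵇ ℝ) (hf : f ∈ CcS X) (hg : g ∈ CcS X) (hle : g ≤ f) :
    ρ.toFun g ≤ ρ.toFun f :=
  qlf_monotone_on_compactSupport_general 𝔅 hsub hCc ρ f g hf hg hle
end

section
/- Let μ be a topological measure on a locally compact, Hausdorff, connected space X, and suppose either (A) μ(X) < ∞ and f ∈ C₀(X), or (B) μ is compact-finite and f ∈ C_c(X). Write [a,b] for the closure of f(X). Then for every continuous φ : [a,b] → ℝ (with φ(0) = 0 when X is locally compact but not compact), the quasi-integral satisfies ρ_μ(φ ∘ f) = ∫_ℝ φ dm_f = ∫_{[a,b]} φ dm_f. -/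
open Set Filter Topology MeasureTheory
open scoped ENNReal BoundedContinuousFunction

universe u

section AuxLemmas

variable {X : Type u} [TopologicalSpace X]

lemma TopMeasure.empty_eq_zero (μ : TopMeasure X) (h : μ.toFun ∅ ≠ ∞) :
    μ.toFun ∅ = 0 := by
  have h1 := μ.tm1 ∅ ∅ disjoint_bot_left (Or.inl isOpen_empty) (Or.inl isOpen_empty)
    (Or.inl (by simp only [Set.union_empty]; exact isOpen_empty))
  rw [Set.union_empty] at h1
  have h2 : μ.toFun ∅ + 0 = μ.toFun ∅ + μ.toFun ∅ := by rw [add_zero]; exact h1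
  exact ((ENNReal.add_right_inj h).mp h2).symm

lemma TopMeasure.compact_le_open (μ : TopMeasure X) {K U : Set X}
    (hK : IsCompact K) (hU : IsOpen U) (hKU : K ⊆ U) : μ.toFun K ≤ μ.toFun U := by
  rw [μ.tm2 U hU]
  exact le_iSup₂ (f := fun (K : Set X) (_ : K ∈ {K : Set X | IsCompact K ∧ K ⊆ U}) =>
    μ.toFun K) K ⟨hK, hKU⟩

lemma TopMeasure.compact_mono [T2Space X] (μ : TopMeasure X) {K S : Set X}
    (hK : IsCompact K) (hS : IsCompact S) (hKS : K ⊆ S) : μ.toFun K ≤ μ.toFun S := by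
  rw [μ.tm3 S hS.isClosed]
  exact le_iInf₂ fun U hU => μ.compact_le_open hK hU.1 (hKS.trans hU.2)

lemma TopMeasure.open_le_compact [T2Space X] (μ : TopMeasure X) {U S : Set X}
    (hU : IsOpen U) (hS : IsCompact S) (hUS : U ⊆ S) : μ.toFun U ≤ μ.toFun S := by
  rw [μ.tm2 U hU]
  exact iSup₂_le fun C hC => μ.compact_mono hC.1 hS (hC.2.trans hUS)

end AuxLemmas

lemma measure_ext_isOpen (m1 m2 : Measure ℝ) [IsFiniteMeasure m1]
    (h : ∀ W : Set ℝ, IsOpen W → m1 W = m2 W) : m1 = m2 := by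
  refine MeasureTheory.ext_of_generate_finite {s : Set ℝ | IsOpen s} ?_ isPiSystem_isOpen
    (fun s hs => h s hs) (h Set.univ isOpen_univ)
  exact BorelSpace.measurable_eq

lemma restrict_eq_self_of_compl (m : Measure ℝ) {C : Set ℝ} (h0 : m Cᶜ = 0) :
    m.restrict C = m :=
  Measure.restrict_eq_self_of_ae_mem (by rw [ae_iff]; exact h0)

lemma integrable_of_compact_carrier (m : Measure ℝ) [IsFiniteMeasure m]
    {C : Set ℝ} (hC : IsCompact C) (h0 : m Cᶜ = 0) {h : ℝ → ℝ}
    (hh : ContinuousOn h C) : Integrable h m := by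
  rw [← restrict_eq_self_of_compl m h0]
  exact hh.integrableOn_compact hC

lemma key_integrals (mf mg : Measure ℝ) [IsFiniteMeasure mf] [IsFiniteMeasure mg]
    {K L : Set ℝ} (hK : IsCompact K) (hL : IsCompact L)
    (hmfK : mf Kᶜ = 0) (hmgL : mg Lᶜ = 0)
    {φ ψ : ℝ → ℝ} (hψ : Continuous ψ) (hψφ : Set.EqOn φ ψ K)
    (hres : mg.restrict {(0:ℝ)}ᶜ = (mf.map ψ).restrict {(0:ℝ)}ᶜ) :
    (∫ t, t ∂mg) = (∫ t, φ t ∂mf) ∧ (∫ t, φ t ∂mf) = ∫ t in K, φ t ∂mf := by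
  have hmeas0 : MeasurableSet ({(0:ℝ)} : Set ℝ) := measurableSet_singleton 0
  have hmap : IsFiniteMeasure (mf.map ψ) := Measure.isFiniteMeasure_map mf ψ
  have hmapC : (mf.map ψ) ((ψ '' K)ᶜ) = 0 := by
    rw [Measure.map_apply hψ.measurable (hK.image hψ).isClosed.measurableSet.compl]
    refine measure_mono_null ?_ hmfK
    intro x hx hxK
    exact hx (Set.mem_image_of_mem ψ hxK)
  have hig : Integrable (fun t : ℝ => t) mg :=
    integrable_of_compact_carrier mg hL hmgL continuousOn_id
  have himap : Integrable (fun t : ℝ => t) (mf.map ψ) :=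
    integrable_of_compact_carrier _ (hK.image hψ) hmapC continuousOn_id
  have hzero : ∀ m : Measure ℝ, (∫ t in ({(0:ℝ)} : Set ℝ), t ∂m) = 0 := by
    intro m
    rw [setIntegral_congr_fun hmeas0 (g := fun _ => (0:ℝ)) (fun x hx => hx)]
    simp
  have hsplit : ∀ m : Measure ℝ, Integrable (fun t : ℝ => t) m →
      (∫ t, t ∂m) = ∫ t in ({(0:ℝ)}ᶜ : Set ℝ), t ∂m := by
    intro m hi
    rw [← integral_add_compl hmeas0 hi, hzero m, zero_add]
  have h1 : (∫ t, t ∂mg) = ∫ t, t ∂(mf.map ψ) := by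
    rw [hsplit mg hig, hsplit _ himap]
    show (∫ t, t ∂(mg.restrict {(0:ℝ)}ᶜ)) = ∫ t, t ∂((mf.map ψ).restrict {(0:ℝ)}ᶜ)
    rw [hres]
  have h2 : (∫ t, t ∂(mf.map ψ)) = ∫ t, ψ t ∂mf :=
    integral_map hψ.aemeasurable aestronglyMeasurable_id
  have hae : (fun t => φ t) =ᵐ[mf] fun t => ψ t :=
    Filter.eventuallyEq_of_mem (mem_ae_iff.mpr hmfK) hψφ
  have h3 : (∫ t, ψ t ∂mf) = ∫ t, φ t ∂mf := integral_congr_ae hae.symm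
  refine ⟨by rw [h1, h2, h3], ?_⟩
  conv_lhs => rw [← restrict_eq_self_of_compl mf hmfK]

/-- for `φ` continuous on `[a,b] = closure (f(X))` (with `φ(0) = 0` when `X` is
not compact), `ρ_μ(φ ∘ f) = ∫_ℝ φ dm_f = ∫_{[a,b]} φ dm_f`, in case (A) (`μ` finite,
`f ∈ C₀(X)`) and in case (B) (`μ` compact-finite, `f ∈ C_c(X)`, `φ(0) = 0`). -/
theorem quasiIntegral_comp {X : Type u} [TopologicalSpace X]
    [LocallyCompactSpace X] [T2Space X] [ConnectedSpace X] (μ : TopMeasure X)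
    (f g : X →ᵇ ℝ) (φ : ℝ → ℝ)
    (hφ : ContinuousOn φ (closure (Set.range (f : X → ℝ))))
    (hφ0 : ¬ CompactSpace X → φ 0 = 0)
    (hg : (g : X → ℝ) = φ ∘ (f : X → ℝ)) :
    (μ.toFun Set.univ ≠ ∞ → f ∈ C0S X →
      ∀ mf mg : Measure ℝ, IsMfA μ f mf → IsMfA μ g mg →
        (∫ t, t ∂mg) = (∫ t, φ t ∂mf) ∧
        (∫ t, φ t ∂mf) = ∫ t in closure (Set.range (f : X → ℝ)), φ t ∂mf) ∧
    (μ.CompactFinite → f ∈ CcS X → φ 0 = 0 →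
      ∀ mf mg : Measure ℝ, IsMfB μ f mf → IsMfB μ g mg →
        (∫ t, t ∂mg) = (∫ t, φ t ∂mf) ∧
        (∫ t, φ t ∂mf) = ∫ t in closure (Set.range (f : X → ℝ)), φ t ∂mf) := by
  set K := closure (Set.range (f : X → ℝ)) with hKdef
  have hKc : IsCompact K := f.isBounded_range.isCompact_closure
  have hKcl : IsClosed K := isClosed_closure
  have hrange : ∀ x : X, (f : X → ℝ) x ∈ K := fun x => subset_closure ⟨x, rfl⟩
  obtain ⟨Ψ, hΨ⟩ := ContinuousMap.exists_restrict_eq (Y := ℝ) hKcl ⟨K.restrict φ, hφ.restrict⟩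
  have hΨφ : Set.EqOn φ (Ψ : ℝ → ℝ) K := fun x hx =>
    (congrFun (congrArg ContinuousMap.toFun hΨ) ⟨x, hx⟩).symm
  have hψ : Continuous (Ψ : ℝ → ℝ) := Ψ.continuous
  have hgψ : ∀ x : X, (g : X → ℝ) x = Ψ ((f : X → ℝ) x) := fun x => by
    rw [hg]; exact hΨφ (hrange x)
  set L := closure (Set.range (g : X → ℝ)) with hLdef
  have hLc : IsCompact L := g.isBounded_range.isCompact_closure
  have hrangeg : ∀ x : X, (g : X → ℝ) x ∈ L := fun x => subset_closure ⟨x, rfl⟩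
  constructor
  · intro hfin _ mf mg hmf hmg
    have hμe : μ.toFun ∅ = 0 :=
      μ.empty_eq_zero (ne_top_of_le_ne_top hfin
        (μ.compact_le_open isCompact_empty isOpen_univ (Set.empty_subset _)))
    haveI : IsFiniteMeasure mf := by
      constructor
      have h := hmf Set.univ isOpen_univ
      rw [Set.preimage_univ] at h
      rw [h]
      exact lt_top_iff_ne_top.mpr hfin
    haveI : IsFiniteMeasure mg := by
      constructor
      have h := hmg Set.univ isOpen_univ
      rw [Set.preimage_univ] at h
      rw [h]
      exact lt_top_iff_ne_top.mpr hfin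
    have hmfK : mf Kᶜ = 0 := by
      rw [hmf Kᶜ hKcl.isOpen_compl]
      have he : (f : X → ℝ) ⁻¹' Kᶜ = ∅ :=
        Set.eq_empty_iff_forall_notMem.mpr fun x hx => hx (hrange x)
      rw [he, hμe]
    have hmgL : mg Lᶜ = 0 := by
      rw [hmg Lᶜ isClosed_closure.isOpen_compl]
      have he : (g : X → ℝ) ⁻¹' Lᶜ = ∅ :=
        Set.eq_empty_iff_forall_notMem.mpr fun x hx => hx (hrangeg x)
      rw [he, hμe]
    have hmap : mg = mf.map (Ψ : ℝ → ℝ) := by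
      refine measure_ext_isOpen mg (mf.map (Ψ : ℝ → ℝ)) ?_
      intro W hW
      rw [hmg W hW, Measure.map_apply hψ.measurable hW.measurableSet,
        hmf ((Ψ : ℝ → ℝ) ⁻¹' W) (hW.preimage hψ)]
      congr 1
      ext x
      simp only [Set.mem_preimage, hgψ x]
    exact key_integrals mf mg hKc hLc hmfK hmgL hψ hΨφ (by rw [hmap])
  · intro hcf hfc hφ0 mf mg hmf hmg
    have hμe : μ.toFun ∅ = 0 := μ.empty_eq_zero (hcf ∅ isCompact_empty)
    have hS : IsCompact (tsupport (f : X → ℝ)) := hfc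
    have hud : (Set.univ \ {(0:ℝ)}) = ({(0:ℝ)}ᶜ : Set ℝ) := by
      ext t; simp
    haveI : IsFiniteMeasure mf := by
      constructor
      rw [hmf Set.univ isOpen_univ, hud]
      refine lt_of_le_of_lt ?_ (lt_top_iff_ne_top.mpr (hcf _ hS))
      refine μ.open_le_compact (isOpen_compl_singleton.preimage f.continuous) hS ?_
      intro x hx
      exact subset_tsupport _ hx
    haveI : IsFiniteMeasure mg := by
      constructor
      rw [hmg Set.univ isOpen_univ, hud]
      refine lt_of_le_of_lt ?_ (lt_top_iff_ne_top.mpr (hcf _ hS))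
      refine μ.open_le_compact (isOpen_compl_singleton.preimage g.continuous) hS ?_
      intro x hx
      have hfx : (f : X → ℝ) x ≠ 0 := by
        intro h0
        apply hx
        show (g : X → ℝ) x = 0
        rw [hg]; show φ ((f : X → ℝ) x) = 0; rw [h0, hφ0]
      exact subset_tsupport _ hfx
    have hmfK : mf Kᶜ = 0 := by
      rw [hmf Kᶜ hKcl.isOpen_compl]
      have he : (f : X → ℝ) ⁻¹' (Kᶜ \ {0}) = ∅ :=
        Set.eq_empty_iff_forall_notMem.mpr fun x hx => hx.1 (hrange x)
      rw [he, hμe]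
    have hmgL : mg Lᶜ = 0 := by
      rw [hmg Lᶜ isClosed_closure.isOpen_compl]
      have he : (g : X → ℝ) ⁻¹' (Lᶜ \ {0}) = ∅ :=
        Set.eq_empty_iff_forall_notMem.mpr fun x hx => hx.1 (hrangeg x)
      rw [he, hμe]
    have hne : ∀ x : X, (Ψ : ℝ → ℝ) ((f : X → ℝ) x) ≠ 0 → (f : X → ℝ) x ≠ 0 := by
      intro x h h0
      apply h
      rw [← hΨφ (hrange x), h0, hφ0]
    have hres : mg.restrict {(0:ℝ)}ᶜ = (mf.map (Ψ : ℝ → ℝ)).restrict {(0:ℝ)}ᶜ := by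
      refine measure_ext_isOpen _ _ ?_
      intro W hW
      have hWm : MeasurableSet W := hW.measurableSet
      have hVo : IsOpen (W ∩ {(0:ℝ)}ᶜ) := hW.inter isOpen_compl_singleton
      rw [Measure.restrict_apply hWm, Measure.restrict_apply hWm,
        Measure.map_apply hψ.measurable hVo.measurableSet,
        hmg _ hVo, hmf _ (hVo.preimage hψ)]
      congr 1
      ext x
      simp only [Set.mem_preimage, Set.mem_diff, Set.mem_inter_iff, Set.mem_compl_iff,
        Set.mem_singleton_iff, hgψ x]
      exact ⟨fun h => ⟨h.1, hne x h.1.2⟩, fun h => ⟨h.1, h.1.2⟩⟩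
    exact key_integrals mf mg hKc hLc hmfK hmgL hψ hΨφ hres
end

section
/- Let μ be a compact-finite topological measure on a locally compact, Hausdorff, connected space X, and let ρ_μ be the associated quasi-integral on C_c(X). Then: (i) if U ⊆ X is open and f ∈ C_c(X) satisfies 0 ≤ f ≤ 1 and supp f ⊆ U, then ρ_μ(f) ≤ μ(U); (ii) if K ⊆ X is compact and f ∈ C_c(X) satisfies 0 ≤ f ≤ 1 and f = 1 on K, then ρ_μ(f) ≥ μ(K). -/
open Set Filter Topology MeasureTheory
open scoped ENNReal BoundedContinuousFunction

universe u

section Aux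
variable {X : Type u} [TopologicalSpace X] [T2Space X] (μ : TopMeasure X)

lemma TopMeasure.mono_co {K U : Set X} (hK : IsCompact K) (hU : IsOpen U) (hKU : K ⊆ U) :
    μ.toFun K ≤ μ.toFun U := by
  have h := μ.tm1 K (U \ K) disjoint_sdiff_right (Or.inr hK)
    (Or.inl (hU.sdiff hK.isClosed)) (Or.inl (by rwa [union_diff_cancel hKU]))
  rw [union_diff_cancel hKU] at h
  rw [h]; exact le_self_add

lemma TopMeasure.mono_oo {V U : Set X} (hV : IsOpen V) (hU : IsOpen U) (hVU : V ⊆ U) :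
    μ.toFun V ≤ μ.toFun U := by
  rw [μ.tm2 V hV]
  exact iSup₂_le fun K hK => μ.mono_co hK.1 hU (hK.2.trans hVU)

lemma TopMeasure.mono_cc {K K' : Set X} (hK : IsCompact K) (hK' : IsCompact K') (hKK : K ⊆ K') :
    μ.toFun K ≤ μ.toFun K' := by
  rw [μ.tm3 K' hK'.isClosed]
  exact le_iInf₂ fun U hU => μ.mono_co hK hU.1 (hKK.trans hU.2)

lemma TopMeasure.open_le_compact_s10 {V K : Set X} (hV : IsOpen V) (hK : IsCompact K) (hVK : V ⊆ K) :
    μ.toFun V ≤ μ.toFun K := by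
  rw [μ.tm2 V hV]
  exact iSup₂_le fun L hL => μ.mono_cc hL.1 hK (hL.2.trans hVK)

lemma TopMeasure.empty_eq_zero_s10 (hcf : μ.CompactFinite) : μ.toFun ∅ = 0 := by
  have h := μ.tm1 ∅ ∅ disjoint_bot_left (Or.inl isOpen_empty) (Or.inl isOpen_empty)
    (Or.inl (by simpa using isOpen_empty))
  rw [union_self] at h
  nth_rewrite 1 [← add_zero (μ.toFun ∅)] at h
  exact ((ENNReal.add_right_inj (hcf ∅ isCompact_empty)).mp h).symm
end Aux

/-- for a compact-finite topological measure `μ` and its quasi-integral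
`ρ_μ(f) = ∫_ℝ id dm_f`: (i) if `0 ≤ f ≤ 1` and `supp f ⊆ U` with `U` open then
`ρ_μ(f) ≤ μ(U)`; (ii) if `0 ≤ f ≤ 1` and `f = 1` on a compact `K` then `ρ_μ(f) ≥ μ(K)`. -/
theorem quasiIntegral_bounds {X : Type u} [TopologicalSpace X]
    [LocallyCompactSpace X] [T2Space X] [ConnectedSpace X] (μ : TopMeasure X)
    (hcf : μ.CompactFinite) (m : (X →ᵇ ℝ) → Measure ℝ)
    (hm : ∀ f ∈ CcS X, IsMfB μ f (m f)) :
    (∀ (U : Set X) (f : X →ᵇ ℝ), IsOpen U → f ∈ CcS X → 0 ≤ f → f ≤ 1 →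
      tsupport (f : X → ℝ) ⊆ U → ENNReal.ofReal (∫ t, t ∂(m f)) ≤ μ.toFun U) ∧
    (∀ (K : Set X) (f : X →ᵇ ℝ), IsCompact K → f ∈ CcS X → 0 ≤ f → f ≤ 1 →
      (∀ x ∈ K, f x = 1) → μ.toFun K ≤ ENNReal.ofReal (∫ t, t ∂(m f))) := by
  have key : ∀ f ∈ CcS X, 0 ≤ f → f ≤ 1 →
      (m f) univ = μ.toFun {x | f x ≠ 0} ∧ (m f) univ ≠ ∞ ∧
      (∀ᵐ t ∂(m f), t ∈ Icc (0:ℝ) 1) ∧ Integrable (fun t : ℝ => t) (m f) := by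
    intro f hfc hf0 hf1
    have hmf := hm f hfc
    have hf0' : ∀ x, 0 ≤ f x := fun x => hf0 x
    have hf1' : ∀ x, f x ≤ 1 := fun x => hf1 x
    have huniv : (m f) univ = μ.toFun {x | f x ≠ 0} := by
      have h := hmf univ isOpen_univ
      have : (f : X → ℝ) ⁻¹' (univ \ {0}) = {x | f x ≠ 0} := by
        ext x; simp
      rwa [this] at h
    have hopen : IsOpen {x | f x ≠ 0} := by
      have : {x | f x ≠ 0} = (f : X → ℝ) ⁻¹' ({0}ᶜ) := rfl
      rw [this]; exact isOpen_compl_singleton.preimage f.continuous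
    have hfin : (m f) univ ≠ ∞ := by
      rw [huniv]
      exact ne_top_of_le_ne_top (hcf _ hfc)
        (μ.open_le_compact_s10 hopen hfc (subset_tsupport _))
    have hae : ∀ᵐ t ∂(m f), t ∈ Icc (0:ℝ) 1 := by
      rw [ae_iff]
      have hset : {t : ℝ | ¬ t ∈ Icc (0:ℝ) 1} = Iio 0 ∪ Ioi 1 := by
        ext t
        simp only [mem_setOf_eq, mem_Icc, not_and_or, not_le, mem_union, mem_Iio, mem_Ioi]
      rw [hset]
      apply measure_union_null
      · rw [hmf (Iio 0) isOpen_Iio]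
        have : (f : X → ℝ) ⁻¹' (Iio 0 \ {0}) = ∅ := by
          ext x; simp only [mem_preimage, mem_diff, mem_Iio, mem_singleton_iff,
            mem_empty_iff_false, iff_false, not_and]
          intro h; linarith [hf0' x]
        rw [this]; exact μ.empty_eq_zero_s10 hcf
      · rw [hmf (Ioi 1) isOpen_Ioi]
        have : (f : X → ℝ) ⁻¹' (Ioi 1 \ {0}) = ∅ := by
          ext x; simp only [mem_preimage, mem_diff, mem_Ioi, mem_singleton_iff,
            mem_empty_iff_false, iff_false, not_and]
          intro h; linarith [hf1' x]
        rw [this]; exact μ.empty_eq_zero_s10 hcf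
    haveI : IsFiniteMeasure (m f) := ⟨hfin.lt_top⟩
    refine ⟨huniv, hfin, hae, ?_⟩
    refine (integrable_const (1:ℝ)).mono' measurable_id.aestronglyMeasurable ?_
    filter_upwards [hae] with t ht
    rw [Real.norm_eq_abs, abs_le]
    exact ⟨by linarith [ht.1], ht.2⟩
  constructor
  · intro U f hU hfc hf0 hf1 hsupp
    obtain ⟨huniv, hfin, hae, hint⟩ := key f hfc hf0 hf1
    haveI : IsFiniteMeasure (m f) := ⟨hfin.lt_top⟩
    have h1 : ∫ t, t ∂(m f) ≤ ∫ _, (1:ℝ) ∂(m f) :=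
      integral_mono_ae hint (integrable_const 1) (hae.mono fun t ht => ht.2)
    rw [integral_const, smul_eq_mul, mul_one] at h1
    have hopen : IsOpen {x | f x ≠ 0} := by
      have : {x | f x ≠ 0} = (f : X → ℝ) ⁻¹' ({0}ᶜ) := rfl
      rw [this]; exact isOpen_compl_singleton.preimage f.continuous
    calc ENNReal.ofReal (∫ t, t ∂(m f)) ≤ ENNReal.ofReal ((m f univ).toReal) :=
          ENNReal.ofReal_le_ofReal h1
      _ = m f univ := ENNReal.ofReal_toReal hfin
      _ = μ.toFun {x | f x ≠ 0} := huniv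
      _ ≤ μ.toFun U := μ.mono_oo hopen hU ((subset_tsupport _).trans hsupp)
  · intro K f hK hfc hf0 hf1 hfK
    obtain ⟨huniv, hfin, hae, hint⟩ := key f hfc hf0 hf1
    haveI : IsFiniteMeasure (m f) := ⟨hfin.lt_top⟩
    have hc : ∀ ε ∈ Ioo (0:ℝ) 1, (1-ε) * (μ.toFun K).toReal ≤ ∫ t, t ∂(m f) := by
      intro ε hε
      have hopen : IsOpen ((f : X → ℝ) ⁻¹' Ioi (1-ε)) := isOpen_Ioi.preimage f.continuous
      have hKsub : K ⊆ (f : X → ℝ) ⁻¹' Ioi (1-ε) := fun x hx => by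
        simp only [mem_preimage, mem_Ioi, hfK x hx]; linarith [hε.1]
      have hμ : μ.toFun K ≤ m f (Ioi (1-ε)) := by
        rw [hm f hfc (Ioi (1-ε)) isOpen_Ioi]
        have hd : Ioi (1-ε) \ {0} = Ioi (1-ε) :=
          Set.diff_singleton_eq_self (by simp only [mem_Ioi, not_lt]; linarith [hε.2])
        rw [hd]
        exact μ.mono_co hK hopen hKsub
      have h2 : (μ.toFun K).toReal ≤ (m f (Ioi (1-ε))).toReal :=
        (ENNReal.toReal_le_toReal (hcf K hK) (measure_ne_top _ _)).mpr hμ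
      have h3 : ∫ t, Set.indicator (Ioi (1-ε)) (fun _ => (1-ε)) t ∂(m f) ≤ ∫ t, t ∂(m f) := by
        apply integral_mono_ae ((integrable_const (1-ε)).indicator measurableSet_Ioi) hint
        filter_upwards [hae] with t ht
        by_cases h : t ∈ Ioi (1-ε)
        · rw [Set.indicator_of_mem h]; exact le_of_lt h
        · rw [Set.indicator_of_notMem h]; exact ht.1
      rw [integral_indicator_const _ measurableSet_Ioi, smul_eq_mul] at h3
      calc (1-ε) * (μ.toFun K).toReal ≤ (m f (Ioi (1-ε))).toReal * (1-ε) := by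
            rw [mul_comm]; exact mul_le_mul_of_nonneg_right h2 (by linarith [hε.2])
        _ ≤ ∫ t, t ∂(m f) := h3
    have hlim : (μ.toFun K).toReal ≤ ∫ t, t ∂(m f) := by
      have ht : Tendsto (fun ε : ℝ => (1-ε) * (μ.toFun K).toReal) (𝓝[>] 0)
          (𝓝 ((μ.toFun K).toReal)) := by
        have hcont : Continuous (fun ε : ℝ => (1-ε) * (μ.toFun K).toReal) := by continuity
        have := hcont.tendsto 0
        simp only [sub_zero, one_mul] at this
        exact this.mono_left nhdsWithin_le_nhds
      refine le_of_tendsto ht ?_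
      filter_upwards [Ioo_mem_nhdsGT_of_mem ⟨le_refl (0:ℝ), one_pos⟩] with ε hε
      exact hc ε hε
    rw [← ENNReal.ofReal_toReal (hcf K hK)]
    exact ENNReal.ofReal_le_ofReal hlim
end
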